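/- arXiv:1805.06709 — 3 statements merged into one kernel-verified Lean document; each statement's English description precedes it below -/
import Mathlib

section
/- Let $\mu$ and $\nu$ be Borel measures on $(0,\infty)$ with $\int_0^\infty (1 \wedge x)\, d\mu(x) < \infty$ and $\int_0^\infty (1 \wedge x)\, d\nu(x) < \infty$. If $\int_0^\infty (1 - e^{-\beta x})\, d\mu(x) = \int_0^\infty (1 - e^{-\beta x})\, d\nu(x)$ for all $\beta > 0$, then $\mu = \nu$. -/
/-!
Substituting `t = e^{-x}` turns `μ` into a measure `m` on `(0, 1)` whose integrals of
`1 - t^n` are known for every `n : ℕ`. Consecutive differences of these are the moments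
`∫ t^n (1 - t) dm` of the finite measure `(1 - t) m` on `[0, 1]`, which by Weierstrass
approximation is determined by its moments. Since `1 - t > 0` on `(0, 1)` and `t = e^{-x}`
is injective, `m` and then `μ` are recovered.
-/

open MeasureTheory Set
open scoped ENNReal

namespace ENNReal

lemma ofReal_one_sub_pow_add {t : ℝ} (ht : 0 ≤ t) (n : ℕ) :
    ENNReal.ofReal (1 - t ^ n) + ENNReal.ofReal (1 - t) * ENNReal.ofReal (t ^ n) =
      ENNReal.ofReal (1 - t ^ (n + 1)) := by
  rcases le_or_gt t 1 with ht1 | ht1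
  · rw [← ENNReal.ofReal_mul (by linarith),
      ← ENNReal.ofReal_add (by simp [pow_le_one₀ ht ht1]) (by positivity)]
    ring_nf
  · have h1 : ∀ k, 1 - t ^ k ≤ 0 := fun k => sub_nonpos.2 (one_le_pow₀ ht1.le)
    simp [ENNReal.ofReal_of_nonpos (h1 _), ENNReal.ofReal_of_nonpos (sub_nonpos.2 ht1.le)]

lemma ofReal_one_sub_pow_le {t : ℝ} (ht : 0 ≤ t) (n : ℕ) :
    ENNReal.ofReal (1 - t ^ n) ≤ n * ENNReal.ofReal (1 - t) := by
  have bernoulli := one_add_mul_le_pow (a := t - 1) (by linarith) n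
  rw [add_sub_cancel] at bernoulli
  rw [← ENNReal.ofReal_natCast, ← ENNReal.ofReal_mul n.cast_nonneg]
  exact ENNReal.ofReal_le_ofReal (by linarith)

end ENNReal

lemma Real.one_sub_exp_neg_le_min_one (x : ℝ) : 1 - Real.exp (-x) ≤ min 1 x :=
  le_min (by linarith [Real.exp_pos (-x)]) (by linarith [Real.one_sub_le_exp_neg x])

namespace MeasureTheory

lemma Measure.map_injective_of_leftInverse {α β : Type*} [MeasurableSpace α]
    [MeasurableSpace β] {f : α → β} {g : β → α} (hf : Measurable f) (hg : Measurable g)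
    (hgf : Function.LeftInverse g f) : Function.Injective (Measure.map f : Measure α → Measure β) :=
  Function.LeftInverse.injective (g := Measure.map g) fun μ => by
    rw [Measure.map_map hg hf, hgf.comp_eq_id, Measure.map_id]

lemma Measure.eq_of_withDensity_eq {α : Type*} [MeasurableSpace α] {μ ν : Measure α}
    {f : α → ℝ≥0∞} (hf : Measurable f) (hμf : ∀ᵐ x ∂μ, f x ≠ 0) (hνf : ∀ᵐ x ∂ν, f x ≠ 0)
    (hf_top : ∀ x, f x ≠ ∞) (h : μ.withDensity f = ν.withDensity f) : μ = ν := by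
  rw [← withDensity_inv_same hf hμf (ae_of_all _ hf_top),
    ← withDensity_inv_same hf hνf (ae_of_all _ hf_top), h]

section Moments

variable {P Q : Measure ℝ} [IsFiniteMeasure P] [IsFiniteMeasure Q] {a b : ℝ}

lemma integrable_of_ae_mem_Icc (hP : ∀ᵐ x ∂P, x ∈ Icc a b) {f : ℝ → ℝ}
    (hf : Continuous f) : Integrable f P := by
  rw [← Measure.restrict_eq_self_of_ae_mem hP]
  exact hf.continuousOn.integrableOn_Icc

lemma integral_polynomial_eval_eq_of_integral_pow_eq (hP : ∀ᵐ x ∂P, x ∈ Icc a b)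
    (hQ : ∀ᵐ x ∂Q, x ∈ Icc a b) (h : ∀ n : ℕ, ∫ x, x ^ n ∂P = ∫ x, x ^ n ∂Q)
    (p : Polynomial ℝ) : ∫ x, p.eval x ∂P = ∫ x, p.eval x ∂Q := by
  have hint : ∀ {ρ : Measure ℝ} [IsFiniteMeasure ρ], (∀ᵐ x ∂ρ, x ∈ Icc a b) →
      ∀ i, Integrable (fun x : ℝ => p.coeff i * x ^ i) ρ :=
    fun hρ i => integrable_of_ae_mem_Icc hρ (by fun_prop)
  simp_rw [Polynomial.eval_eq_sum_range]
  rw [integral_finsetSum _ fun i _ => hint hP i, integral_finsetSum _ fun i _ => hint hQ i]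
  simp_rw [integral_const_mul, h]

lemma dist_integral_le_of_forall_mem_Icc (hP : ∀ᵐ x ∂P, x ∈ Icc a b) {f g : ℝ → ℝ}
    (hf : Continuous f) (hg : Continuous g) {ε : ℝ} (hfg : ∀ x ∈ Icc a b, |f x - g x| < ε) :
    dist (∫ x, f x ∂P) (∫ x, g x ∂P) ≤ ε * P.real univ := by
  rw [dist_eq_norm, ← integral_sub (integrable_of_ae_mem_Icc hP hf)
    (integrable_of_ae_mem_Icc hP hg)]
  refine norm_integral_le_of_norm_le_const ?_
  filter_upwards [hP] with x hx using (hfg x hx).le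

lemma integral_eq_of_integral_pow_eq (hP : ∀ᵐ x ∂P, x ∈ Icc a b)
    (hQ : ∀ᵐ x ∂Q, x ∈ Icc a b) (h : ∀ n : ℕ, ∫ x, x ^ n ∂P = ∫ x, x ^ n ∂Q)
    {f : ℝ → ℝ} (hf : Continuous f) : ∫ x, f x ∂P = ∫ x, f x ∂Q := by
  refine eq_of_forall_dist_le fun ε hε => ?_
  set C := P.real univ + Q.real univ
  have hC : 0 ≤ C := by positivity
  obtain ⟨p, hp⟩ := exists_polynomial_near_of_continuousOn a b f hf.continuousOn
    (ε / (C + 1)) (by positivity)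
  have hfp : ∀ x ∈ Icc a b, |f x - p.eval x| < ε / (C + 1) := fun x hx => by
    rw [abs_sub_comm]; exact hp x hx
  calc dist (∫ x, f x ∂P) (∫ x, f x ∂Q)
      ≤ dist (∫ x, f x ∂P) (∫ x, p.eval x ∂P) + dist (∫ x, p.eval x ∂Q) (∫ x, f x ∂Q) := by
        rw [integral_polynomial_eval_eq_of_integral_pow_eq hP hQ h p]
        exact dist_triangle _ _ _
    _ ≤ ε / (C + 1) * P.real univ + ε / (C + 1) * Q.real univ := by
        rw [dist_comm (∫ x, p.eval x ∂Q)]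
        exact add_le_add (dist_integral_le_of_forall_mem_Icc hP hf p.continuous hfp)
          (dist_integral_le_of_forall_mem_Icc hQ hf p.continuous hfp)
    _ ≤ ε := by
        rw [← mul_add, div_mul_eq_mul_div, div_le_iff₀ (by positivity)]
        nlinarith

theorem Measure.ext_of_integral_pow_eq (hP : ∀ᵐ x ∂P, x ∈ Icc a b)
    (hQ : ∀ᵐ x ∂Q, x ∈ Icc a b) (h : ∀ n : ℕ, ∫ x, x ^ n ∂P = ∫ x, x ^ n ∂Q) : P = Q :=
  ext_of_forall_integral_eq_of_IsFiniteMeasure fun f =>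
    integral_eq_of_integral_pow_eq hP hQ h f.continuous

end Moments

section OneSubPow

variable {m m' : Measure ℝ}

lemma lintegral_ofReal_one_sub_pow_lt_top (hm : ∀ᵐ t ∂m, 0 ≤ t)
    (hfin : ∫⁻ t, ENNReal.ofReal (1 - t) ∂m < ∞) (n : ℕ) :
    ∫⁻ t, ENNReal.ofReal (1 - t ^ n) ∂m < ∞ :=
  calc ∫⁻ t, ENNReal.ofReal (1 - t ^ n) ∂m ≤ ∫⁻ t, n * ENNReal.ofReal (1 - t) ∂m :=
        lintegral_mono_ae <| by
          filter_upwards [hm] with t ht using ENNReal.ofReal_one_sub_pow_le ht n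
    _ = n * ∫⁻ t, ENNReal.ofReal (1 - t) ∂m := lintegral_const_mul' _ _ (by simp)
    _ < ∞ := ENNReal.mul_lt_top (by simp) hfin

lemma lintegral_ofReal_one_sub_pow_add (hm : ∀ᵐ t ∂m, 0 ≤ t) (n : ℕ) :
    ∫⁻ t, ENNReal.ofReal (1 - t ^ n) ∂m +
        ∫⁻ t, ENNReal.ofReal (1 - t) * ENNReal.ofReal (t ^ n) ∂m =
      ∫⁻ t, ENNReal.ofReal (1 - t ^ (n + 1)) ∂m := by
  rw [← lintegral_add_left (by fun_prop)]
  exact lintegral_congr_ae <| by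
    filter_upwards [hm] with t ht using ENNReal.ofReal_one_sub_pow_add ht n

lemma ae_mem_Icc_withDensity_ofReal_one_sub (hm : ∀ᵐ t ∂m, 0 ≤ t) :
    ∀ᵐ t ∂m.withDensity (fun t => ENNReal.ofReal (1 - t)), t ∈ Icc (0 : ℝ) 1 := by
  rw [ae_withDensity_iff (by fun_prop)]
  filter_upwards [hm] with t ht hne
  exact ⟨ht, (by simpa using hne : t < 1).le⟩

lemma integral_pow_withDensity_ofReal_one_sub (hm : ∀ᵐ t ∂m, 0 ≤ t) (n : ℕ) :
    ∫ t, t ^ n ∂m.withDensity (fun t => ENNReal.ofReal (1 - t)) =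
      (∫⁻ t, ENNReal.ofReal (1 - t) * ENNReal.ofReal (t ^ n) ∂m).toReal := by
  rw [integral_eq_lintegral_of_nonneg_ae ?_ (by fun_prop),
    lintegral_withDensity_eq_lintegral_mul _ (by fun_prop) (by fun_prop)]
  · rfl
  · filter_upwards [ae_mem_Icc_withDensity_ofReal_one_sub hm] with t ht
    exact pow_nonneg ht.1 n

theorem withDensity_ofReal_one_sub_eq_of_lintegral_eq (hm : ∀ᵐ t ∂m, 0 ≤ t)
    (hm' : ∀ᵐ t ∂m', 0 ≤ t) (hfin : ∫⁻ t, ENNReal.ofReal (1 - t) ∂m' < ∞)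
    (h : ∀ n : ℕ, ∫⁻ t, ENNReal.ofReal (1 - t ^ n) ∂m = ∫⁻ t, ENNReal.ofReal (1 - t ^ n) ∂m') :
    m.withDensity (fun t => ENNReal.ofReal (1 - t)) =
      m'.withDensity (fun t => ENNReal.ofReal (1 - t)) := by
  have hmoment (n : ℕ) : ∫⁻ t, ENNReal.ofReal (1 - t) * ENNReal.ofReal (t ^ n) ∂m =
      ∫⁻ t, ENNReal.ofReal (1 - t) * ENNReal.ofReal (t ^ n) ∂m' := by
    have hsum := lintegral_ofReal_one_sub_pow_add hm n
    rw [h, h, ← lintegral_ofReal_one_sub_pow_add hm' n] at hsum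
    exact (ENNReal.add_right_inj (lintegral_ofReal_one_sub_pow_lt_top hm' hfin n).ne).1 hsum
  have hfin_m : ∫⁻ t, ENNReal.ofReal (1 - t) ∂m < ∞ := by
    simpa only [pow_one] using (h 1).trans_lt (by simpa only [pow_one] using hfin)
  have := isFiniteMeasure_withDensity hfin.ne
  have := isFiniteMeasure_withDensity hfin_m.ne
  refine Measure.ext_of_integral_pow_eq (ae_mem_Icc_withDensity_ofReal_one_sub hm)
    (ae_mem_Icc_withDensity_ofReal_one_sub hm') fun n => ?_
  rw [integral_pow_withDensity_ofReal_one_sub hm, integral_pow_withDensity_ofReal_one_sub hm',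
    hmoment]

end OneSubPow

section ExpNeg

lemma Measure.map_exp_neg_injective :
    Function.Injective (Measure.map fun x : ℝ => Real.exp (-x)) :=
  Measure.map_injective_of_leftInverse (g := fun t => -Real.log t) (by fun_prop) (by fun_prop)
    fun x => by simp

lemma ae_nonneg_map_exp_neg (ρ : Measure ℝ) :
    ∀ᵐ t ∂ρ.map (fun x => Real.exp (-x)), 0 ≤ t :=
  (ae_map_iff (by fun_prop) measurableSet_Ici).2 (ae_of_all _ fun x => (Real.exp_pos _).le)

lemma ae_lt_one_map_exp_neg {ρ : Measure ℝ} (hρ : ∀ᵐ x ∂ρ, 0 < x) :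
    ∀ᵐ t ∂ρ.map (fun x => Real.exp (-x)), t < 1 :=
  (ae_map_iff (by fun_prop) measurableSet_Iio).2 (by filter_upwards [hρ] with x hx using by simpa)

lemma lintegral_ofReal_one_sub_pow_map_exp_neg (ρ : Measure ℝ) (n : ℕ) :
    ∫⁻ t, ENNReal.ofReal (1 - t ^ n) ∂ρ.map (fun x => Real.exp (-x)) =
      ∫⁻ x, ENNReal.ofReal (1 - Real.exp (-n * x)) ∂ρ := by
  rw [lintegral_map (by fun_prop) (by fun_prop)]
  refine lintegral_congr fun x => ?_
  rw [← Real.exp_nat_mul, mul_neg, neg_mul]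

lemma lintegral_ofReal_one_sub_map_exp_neg_lt_top {ρ : Measure ℝ}
    (hρ : ∫⁻ x, ENNReal.ofReal (min 1 x) ∂ρ < ∞) :
    ∫⁻ t, ENNReal.ofReal (1 - t) ∂ρ.map (fun x => Real.exp (-x)) < ∞ := by
  simpa using (lintegral_ofReal_one_sub_pow_map_exp_neg ρ 1).trans_lt <|
    (lintegral_mono fun x => ENNReal.ofReal_le_ofReal <| by
      simpa using Real.one_sub_exp_neg_le_min_one x).trans_lt hρ

end ExpNeg

end MeasureTheory

theorem bernstein_laplace_uniqueness_general (μ ν : Measure ℝ)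
    (hμs : μ (Set.Iic 0) = 0) (hνs : ν (Set.Iic 0) = 0)
    (hν : ∫⁻ x in Set.Ioi (0:ℝ), ENNReal.ofReal (min 1 x) ∂ν < ⊤)
    (h : ∀ β : ℝ, 0 < β →
      ∫⁻ x in Set.Ioi (0:ℝ), ENNReal.ofReal (1 - Real.exp (-β * x)) ∂μ =
      ∫⁻ x in Set.Ioi (0:ℝ), ENNReal.ofReal (1 - Real.exp (-β * x)) ∂ν) :
    μ = ν := by
  have hpos {ρ : Measure ℝ} (hρ : ρ (Set.Iic 0) = 0) : ∀ᵐ x ∂ρ, x ∈ Set.Ioi (0 : ℝ) := by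
    filter_upwards [measure_eq_zero_iff_ae_notMem.1 hρ] with x hx using by simpa using hx
  have hμpos := hpos hμs
  have hνpos := hpos hνs
  rw [Measure.restrict_eq_self_of_ae_mem hνpos] at hν
  simp only [Measure.restrict_eq_self_of_ae_mem hμpos, Measure.restrict_eq_self_of_ae_mem hνpos]
    at h
  have hdensity_ne_zero {ρ : Measure ℝ} (hρ : ∀ᵐ x ∂ρ, x ∈ Set.Ioi (0 : ℝ)) :
      ∀ᵐ t ∂ρ.map (fun x => Real.exp (-x)), ENNReal.ofReal (1 - t) ≠ 0 := by
    filter_upwards [ae_lt_one_map_exp_neg hρ] with t ht using by simpa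
  refine Measure.map_exp_neg_injective <| Measure.eq_of_withDensity_eq (by fun_prop)
    (hdensity_ne_zero hμpos) (hdensity_ne_zero hνpos) (fun _ => ENNReal.ofReal_ne_top) <|
    withDensity_ofReal_one_sub_eq_of_lintegral_eq (ae_nonneg_map_exp_neg μ)
      (ae_nonneg_map_exp_neg ν) (lintegral_ofReal_one_sub_map_exp_neg_lt_top hν) fun n => ?_
  rw [lintegral_ofReal_one_sub_pow_map_exp_neg, lintegral_ofReal_one_sub_pow_map_exp_neg]
  rcases n.eq_zero_or_pos with rfl | hn
  · simp
  · exact h n (by exact_mod_cast hn)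

/-- Uniqueness of the Bernstein-type Laplace transform: two Borel measures on `(0,∞)`
integrating `1 ∧ x` finitely and having the same integrals of `1 - e^{-βx}` for all
`β > 0` coincide. -/
theorem bernstein_laplace_uniqueness (μ ν : Measure ℝ)
    (hμs : μ (Set.Iic 0) = 0) (hνs : ν (Set.Iic 0) = 0)
    (hμ : ∫⁻ x in Set.Ioi (0:ℝ), ENNReal.ofReal (min 1 x) ∂μ < ⊤)
    (hν : ∫⁻ x in Set.Ioi (0:ℝ), ENNReal.ofReal (min 1 x) ∂ν < ⊤)
    (h : ∀ β : ℝ, 0 < β →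
      ∫⁻ x in Set.Ioi (0:ℝ), ENNReal.ofReal (1 - Real.exp (-β * x)) ∂μ =
      ∫⁻ x in Set.Ioi (0:ℝ), ENNReal.ofReal (1 - Real.exp (-β * x)) ∂ν) :
    μ = ν :=
  bernstein_laplace_uniqueness_general μ ν hμs hνs hν h
end

section
/- Let $\alpha > 0$, $a < b$ reals, $f \in C([a,b])$, and let $U^B_\alpha f(x) = \int_a^b \frac{1}{\sqrt{2\alpha}} e^{-\sqrt{2\alpha}|y-x|} f(y)\,dy$ (extending $f$ by $0$ outside $[a,b]$). Define $u(x) = U^B_\alpha f(x) - \frac{\sinh(\sqrt{2\alpha}(b-x))}{\sinh(\sqrt{2\alpha}(b-a))} U^B_\alpha f(a) - \frac{\sinh(\sqrt{2\alpha}(x-a))}{\sinh(\sqrt{2\alpha}(b-a))} U^B_\alpha f(b)$ for $x \in [a,b]$. Then $u(a) = u(b) = 0$, $u$ is twice continuously differentiable on $[a,b]$, and $u''(x) = 2(\alpha u(x) - f(x))$ for all $x \in [a,b]$. -/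
/-!
With `c = √(2α)`, splitting the kernel integral at `y = x` gives
`U f(x) = (e^{-cx} ∫_a^x e^{ct} f + e^{cx} ∫_x^b e^{-ct} f) / c`, and two applications of the
fundamental theorem of calculus show `(U f)'' = c² U f - 2 f` on all of `ℝ` once `f` is extended
continuously beyond `[a, b]`. The subtracted `sinh` combination solves `w'' = c² w` and takes the
values `U f(a)`, `U f(b)` at the endpoints, so `u` vanishes there and satisfies the same equation.
-/

open MeasureTheory Real Set

theorem Continuous.hasDerivAt_intervalIntegral_left {φ : ℝ → ℝ} (hφ : Continuous φ)
    (b x : ℝ) :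
    HasDerivAt (fun x => ∫ t in x..b, φ t) (-φ x) x :=
  intervalIntegral.integral_hasDerivAt_left (hφ.intervalIntegrable x b)
    (hφ.stronglyMeasurableAtFilter _ _) hφ.continuousAt

theorem hasDerivAt_exp_mul (c x : ℝ) :
    HasDerivAt (fun x => exp (c * x)) (c * exp (c * x)) x := by
  simpa [mul_comm] using ((hasDerivAt_id x).const_mul c).exp

theorem hasDerivAt_intervalIntegral_exp_mul {g : ℝ → ℝ} (hg : Continuous g) (a b c x : ℝ) :
    HasDerivAt (fun x => ∫ t in a..x, exp (c * t) * g t) (exp (c * x) * g x) x ∧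
    HasDerivAt (fun x => ∫ t in x..b, exp (c * t) * g t) (-(exp (c * x) * g x)) x := by
  have hφ : Continuous fun t => exp (c * t) * g t := by fun_prop
  exact ⟨(hφ.integral_hasStrictDerivAt a x).hasDerivAt,
    hφ.hasDerivAt_intervalIntegral_left b x⟩

section FreeResolvent

variable (c a b : ℝ) (g : ℝ → ℝ)

noncomputable def freeResolvent (x : ℝ) : ℝ :=
  1 / c * (exp (-c * x) * (∫ t in a..x, exp (c * t) * g t)
    + exp (c * x) * ∫ t in x..b, exp (-c * t) * g t)

noncomputable def freeResolventDeriv (x : ℝ) : ℝ :=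
  -(exp (-c * x) * ∫ t in a..x, exp (c * t) * g t)
    + exp (c * x) * ∫ t in x..b, exp (-c * t) * g t

variable {c a b g}

theorem intervalIntegral_exp_abs_mul_eq_freeResolvent (hg : Continuous g) {x : ℝ}
    (hx : x ∈ Icc a b) :
    ∫ y in a..b, 1 / c * exp (-c * |y - x|) * g y = freeResolvent c a b g x := by
  have hint (p q : ℝ) :
      IntervalIntegrable (fun y => 1 / c * exp (-c * |y - x|) * g y) volume p q := by
    apply Continuous.intervalIntegrable; fun_prop
  have left : ∫ y in a..x, 1 / c * exp (-c * |y - x|) * g y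
      = 1 / c * exp (-c * x) * ∫ t in a..x, exp (c * t) * g t := by
    rw [← intervalIntegral.integral_const_mul]
    refine intervalIntegral.integral_congr fun y hy => ?_
    rw [uIcc_of_le hx.1] at hy
    rw [abs_of_nonpos (sub_nonpos.2 hy.2), show -c * -(y - x) = -c * x + c * y by ring, exp_add]
    ring
  have right : ∫ y in x..b, 1 / c * exp (-c * |y - x|) * g y
      = 1 / c * exp (c * x) * ∫ t in x..b, exp (-c * t) * g t := by
    rw [← intervalIntegral.integral_const_mul]
    refine intervalIntegral.integral_congr fun y hy => ?_
    rw [uIcc_of_le hx.2] at hy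
    rw [abs_of_nonneg (sub_nonneg.2 hy.1), show -c * (y - x) = c * x + -c * y by ring, exp_add]
    ring
  rw [← intervalIntegral.integral_add_adjacent_intervals (hint a x) (hint x b), left, right,
    freeResolvent]
  ring

theorem hasDerivAt_freeResolvent (hc : c ≠ 0) (hg : Continuous g) (x : ℝ) :
    HasDerivAt (freeResolvent c a b g) (freeResolventDeriv c a b g x) x := by
  have hF := (hasDerivAt_intervalIntegral_exp_mul hg a b c x).1
  have hG := (hasDerivAt_intervalIntegral_exp_mul hg a b (-c) x).2
  refine ((((hasDerivAt_exp_mul (-c) x).mul hF).add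
    ((hasDerivAt_exp_mul c x).mul hG)).const_mul (1 / c)).congr_deriv ?_
  rw [freeResolventDeriv]
  field_simp
  ring

theorem hasDerivAt_freeResolventDeriv (hc : c ≠ 0) (hg : Continuous g) (x : ℝ) :
    HasDerivAt (freeResolventDeriv c a b g) (c ^ 2 * freeResolvent c a b g x - 2 * g x) x := by
  have hF := (hasDerivAt_intervalIntegral_exp_mul hg a b c x).1
  have hG := (hasDerivAt_intervalIntegral_exp_mul hg a b (-c) x).2
  refine (((hasDerivAt_exp_mul (-c) x).mul hF).neg.add
    ((hasDerivAt_exp_mul c x).mul hG)).congr_deriv ?_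
  have hexp : exp (-c * x) * exp (c * x) = 1 := by rw [← exp_add]; simp
  have hc2 : c ^ 2 * (1 / c) = c := by field_simp
  rw [freeResolvent, ← mul_assoc (c ^ 2), hc2]
  linear_combination (-2 * g x) * hexp

end FreeResolvent

section SinhInterpolant

variable (c a b A B : ℝ)

noncomputable def sinhInterpolant (x : ℝ) : ℝ :=
  sinh (c * (b - x)) / sinh (c * (b - a)) * A + sinh (c * (x - a)) / sinh (c * (b - a)) * B

noncomputable def sinhInterpolantDeriv (x : ℝ) : ℝ :=
  c * cosh (c * (x - a)) / sinh (c * (b - a)) * B - c * cosh (c * (b - x)) / sinh (c * (b - a)) * A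

variable {c a b}

theorem sinhInterpolant_left (h : sinh (c * (b - a)) ≠ 0) : sinhInterpolant c a b A B a = A := by
  simp [sinhInterpolant, h]

theorem sinhInterpolant_right (h : sinh (c * (b - a)) ≠ 0) : sinhInterpolant c a b A B b = B := by
  simp [sinhInterpolant, h]

theorem hasDerivAt_sinhInterpolant (x : ℝ) :
    HasDerivAt (sinhInterpolant c a b A B) (sinhInterpolantDeriv c a b A B x) x := by
  have hl := (((hasDerivAt_id' x).const_sub b).const_mul c).sinh
  have hr := (((hasDerivAt_id' x).sub_const a).const_mul c).sinh
  refine (((hl.div_const _).mul_const A).add ((hr.div_const _).mul_const B)).congr_deriv ?_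
  rw [sinhInterpolantDeriv]
  ring

theorem hasDerivAt_sinhInterpolantDeriv (x : ℝ) :
    HasDerivAt (sinhInterpolantDeriv c a b A B) (c ^ 2 * sinhInterpolant c a b A B x) x := by
  have hl := (((hasDerivAt_id' x).const_sub b).const_mul c).cosh
  have hr := (((hasDerivAt_id' x).sub_const a).const_mul c).cosh
  refine ((((hr.const_mul c).div_const _).mul_const B).sub
    (((hl.const_mul c).div_const _).mul_const A)).congr_deriv ?_
  rw [sinhInterpolant]
  ring

end SinhInterpolant

theorem contDiff_two_of_hasDerivAt {w w' w'' : ℝ → ℝ} (hw : ∀ x, HasDerivAt w (w' x) x)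
    (hw' : ∀ x, HasDerivAt w' (w'' x) x) (hw'' : Continuous w'') : ContDiff ℝ 2 w := by
  have hderiv : deriv w = w' := funext fun x => (hw x).deriv
  have hderiv' : deriv w' = w'' := funext fun x => (hw' x).deriv
  rw [show (2 : WithTop ℕ∞) = 1 + 1 from rfl, contDiff_succ_iff_deriv, hderiv,
    contDiff_one_iff_deriv, hderiv']
  exact ⟨fun x => (hw x).differentiableAt, by simp, fun x => (hw' x).differentiableAt, hw''⟩

theorem iteratedDeriv_two_eq_of_hasDerivAt {w w' w'' : ℝ → ℝ} (hw : ∀ x, HasDerivAt w (w' x) x)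
    (hw' : ∀ x, HasDerivAt w' (w'' x) x) (x : ℝ) : iteratedDeriv 2 w x = w'' x := by
  rw [iteratedDeriv_succ, iteratedDeriv_one, funext fun x => (hw x).deriv, (hw' x).deriv]

theorem iteratedDerivWithin_eq_iteratedDeriv_of_eqOn {𝕜 F : Type*} [NontriviallyNormedField 𝕜]
    [NormedAddCommGroup F] [NormedSpace 𝕜 F] {n : ℕ} {u w : 𝕜 → F} {s : Set 𝕜} {x : 𝕜}
    (hs : UniqueDiffOn 𝕜 s) (hw : ContDiff 𝕜 n w) (h : EqOn u w s) (hx : x ∈ s) :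
    iteratedDerivWithin n u s x = iteratedDeriv n w x :=
  (iteratedDerivWithin_congr h hx).trans (iteratedDerivWithin_eq_iteratedDeriv hs hw.contDiffAt hx)

theorem ContinuousOn.exists_continuous_eqOn_Icc {f : ℝ → ℝ} {a b : ℝ} (hab : a ≤ b)
    (hf : ContinuousOn f (Icc a b)) : ∃ g : ℝ → ℝ, Continuous g ∧ EqOn f g (Icc a b) :=
  ⟨IccExtend hab ((Icc a b).domRestrict f), hf.domRestrict.Icc_extend',
    fun x hx => by rw [IccExtend_of_mem hab _ hx]; rfl⟩

theorem setIntegral_Icc_exp_abs_mul_eq_freeResolvent {c a b x : ℝ} {f g : ℝ → ℝ}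
    (hg : Continuous g) (hfg : EqOn f g (Icc a b)) (hx : x ∈ Icc a b) :
    ∫ y in Icc a b, 1 / c * exp (-c * |y - x|) * f y = freeResolvent c a b g x := by
  rw [setIntegral_congr_fun measurableSet_Icc fun y hy => by rw [hfg hy],
    integral_Icc_eq_integral_Ioc, ← intervalIntegral.integral_of_le (hx.1.trans hx.2),
    intervalIntegral_exp_abs_mul_eq_freeResolvent hg hx]

section DirichletResolvent

variable (c a b : ℝ) (g : ℝ → ℝ)

noncomputable def dirichletResolvent (x : ℝ) : ℝ :=
  freeResolvent c a b g x
    - sinhInterpolant c a b (freeResolvent c a b g a) (freeResolvent c a b g b) x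

variable {c a b g}

theorem dirichletResolvent_left (h : sinh (c * (b - a)) ≠ 0) :
    dirichletResolvent c a b g a = 0 := by
  rw [dirichletResolvent, sinhInterpolant_left _ _ h, sub_self]

theorem dirichletResolvent_right (h : sinh (c * (b - a)) ≠ 0) :
    dirichletResolvent c a b g b = 0 := by
  rw [dirichletResolvent, sinhInterpolant_right _ _ h, sub_self]

theorem exists_hasDerivAt_dirichletResolvent (hc : c ≠ 0) (hg : Continuous g) :
    ∃ w' : ℝ → ℝ, (∀ x, HasDerivAt (dirichletResolvent c a b g) (w' x) x) ∧
      ∀ x, HasDerivAt w' (c ^ 2 * dirichletResolvent c a b g x - 2 * g x) x := by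
  set A := freeResolvent c a b g a
  set B := freeResolvent c a b g b
  refine ⟨fun x => freeResolventDeriv c a b g x - sinhInterpolantDeriv c a b A B x,
    fun x => (hasDerivAt_freeResolvent hc hg x).sub (hasDerivAt_sinhInterpolant A B x),
    fun x => ?_⟩
  refine ((hasDerivAt_freeResolventDeriv hc hg x).sub
    (hasDerivAt_sinhInterpolantDeriv A B x)).congr_deriv ?_
  rw [dirichletResolvent]
  ring

theorem contDiff_dirichletResolvent (hc : c ≠ 0) (hg : Continuous g) :
    ContDiff ℝ 2 (dirichletResolvent c a b g) := by
  obtain ⟨w', hw, hw'⟩ := exists_hasDerivAt_dirichletResolvent (a := a) (b := b) hc hg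
  have hcont : Continuous (dirichletResolvent c a b g) :=
    continuous_iff_continuousAt.2 fun x => (hw x).continuousAt
  exact contDiff_two_of_hasDerivAt hw hw' (by fun_prop)

theorem iteratedDeriv_two_dirichletResolvent (hc : c ≠ 0) (hg : Continuous g) (x : ℝ) :
    iteratedDeriv 2 (dirichletResolvent c a b g) x
      = c ^ 2 * dirichletResolvent c a b g x - 2 * g x := by
  obtain ⟨w', hw, hw'⟩ := exists_hasDerivAt_dirichletResolvent (a := a) (b := b) hc hg
  exact iteratedDeriv_two_eq_of_hasDerivAt hw hw' x

end DirichletResolvent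

/-- The Dirichlet resolvent on `[a,b]`: with `U^B_α f(x) = ∫_a^b (1/√(2α)) e^{-√(2α)|y-x|} f(y) dy`
and `u(x) = U^B_α f(x) - sinh(√(2α)(b-x))/sinh(√(2α)(b-a)) · U^B_α f(a)
- sinh(√(2α)(x-a))/sinh(√(2α)(b-a)) · U^B_α f(b)`, one has `u(a) = u(b) = 0`,
`u` is twice continuously differentiable on `[a,b]`,
and `u'' = 2(α u - f)` on `[a,b]`. -/
theorem dirichlet_resolvent_interval (α a b : ℝ) (hα : 0 < α) (hab : a < b)
    (f : ℝ → ℝ) (hf : ContinuousOn f (Set.Icc a b))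
    (UB u : ℝ → ℝ)
    (hUB : ∀ x, UB x = ∫ y in Set.Icc a b,
        (1 / Real.sqrt (2 * α)) * Real.exp (-(Real.sqrt (2 * α)) * |y - x|) * f y)
    (hu : ∀ x, u x = UB x
        - Real.sinh (Real.sqrt (2 * α) * (b - x)) /
            Real.sinh (Real.sqrt (2 * α) * (b - a)) * UB a
        - Real.sinh (Real.sqrt (2 * α) * (x - a)) /
            Real.sinh (Real.sqrt (2 * α) * (b - a)) * UB b) :
    u a = 0 ∧ u b = 0 ∧ ContDiffOn ℝ 2 u (Set.Icc a b) ∧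
    ∀ x ∈ Set.Icc a b, iteratedDerivWithin 2 u (Set.Icc a b) x = 2 * (α * u x - f x) := by
  set c := √(2 * α)
  have hc : 0 < c := sqrt_pos.2 (by positivity)
  have hc2 : c ^ 2 = 2 * α := sq_sqrt (by positivity)
  have hS : sinh (c * (b - a)) ≠ 0 := (sinh_pos_iff.2 (mul_pos hc (sub_pos.2 hab))).ne'
  obtain ⟨g, hg, hfg⟩ := hf.exists_continuous_eqOn_Icc hab.le
  have hUB_eq : EqOn UB (freeResolvent c a b g) (Icc a b) := fun x hx => by
    rw [hUB x, setIntegral_Icc_exp_abs_mul_eq_freeResolvent hg hfg hx]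
  have hu_eq : EqOn u (dirichletResolvent c a b g) (Icc a b) := fun x hx => by
    rw [hu x, dirichletResolvent, sinhInterpolant, hUB_eq hx, hUB_eq (left_mem_Icc.2 hab.le),
      hUB_eq (right_mem_Icc.2 hab.le)]
    ring
  have hw := contDiff_dirichletResolvent (a := a) (b := b) hc.ne' hg
  refine ⟨?_, ?_, hw.contDiffOn.congr hu_eq, fun x hx => ?_⟩
  · rw [hu_eq (left_mem_Icc.2 hab.le), dirichletResolvent_left hS]
  · rw [hu_eq (right_mem_Icc.2 hab.le), dirichletResolvent_right hS]
  · rw [iteratedDerivWithin_eq_iteratedDeriv_of_eqOn (uniqueDiffOn_Icc hab) hw hu_eq hx,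
      iteratedDeriv_two_dirichletResolvent hc.ne' hg, ← hu_eq hx, ← hfg hx, hc2]
    ring
end

section
/- Let $\alpha > 0$, $f \in C_0([0,\infty))$, and define $u(x) = U^B_\alpha f(x) - e^{-\sqrt{2\alpha}\,x}\, U^B_\alpha f(0)$ on $[0,\infty)$, where $U^B_\alpha f(x) = \int_0^\infty \frac{1}{\sqrt{2\alpha}} e^{-\sqrt{2\alpha}|y-x|} f(y)\,dy$. Then $u(0) = 0$, $u$ is twice continuously differentiable, $u''(x) = 2(\alpha u(x) - f(x))$, and $u''(0) = -2 f(0)$. -/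
/-!
Put `c = √(2α)` and extend `f` to `ℝ` by `f 0` on `(-∞, 0)`. Splitting the kernel at `y = x`
writes, for `x ≥ 0`, `c · U^B_α f(x) = e^{-cx} ∫₀ˣ e^{cy} f + e^{cx} ∫ₓ^∞ e^{-cy} f`,
a variation-of-constants solution of `w'' = c² w - 2 f` on all of `ℝ`. Subtracting the
homogeneous solution `e^{-cx} U^B_α f(0)` preserves the equation and makes `u(0) = 0`;
evaluating the equation at `0` gives `u''(0) = -2 f(0)`.
-/

open MeasureTheory Filter

open Real Set

/-- Variation of constants for `w'' = c² w - 2 F`. -/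
noncomputable def expGreen (c : ℝ) (F : ℝ → ℝ) (a b x : ℝ) : ℝ :=
  (exp (-c * x) * (a + ∫ y in (0:ℝ)..x, exp (c * y) * F y) +
    exp (c * x) * (b - ∫ y in (0:ℝ)..x, exp (-c * y) * F y)) / c

noncomputable def expGreenDeriv (c : ℝ) (F : ℝ → ℝ) (a b x : ℝ) : ℝ :=
  -(exp (-c * x) * (a + ∫ y in (0:ℝ)..x, exp (c * y) * F y)) +
    exp (c * x) * (b - ∫ y in (0:ℝ)..x, exp (-c * y) * F y)

section expGreen

variable {c : ℝ} {F : ℝ → ℝ} (a b : ℝ)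

lemma hasDerivAt_exp_const_mul (k x : ℝ) :
    HasDerivAt (fun x => exp (k * x)) (k * exp (k * x)) x := by
  simpa [mul_comm] using ((hasDerivAt_id x).const_mul k).exp

lemma hasDerivAt_integral_exp_mul (hF : Continuous F) (k x : ℝ) :
    HasDerivAt (fun x => ∫ y in (0:ℝ)..x, exp (k * y) * F y) (exp (k * x) * F x) x :=
  ((by fun_prop : Continuous fun y => exp (k * y) * F y).integral_hasStrictDerivAt 0 x).hasDerivAt

lemma hasDerivAt_expGreen (hc : c ≠ 0) (hF : Continuous F) (x : ℝ) :
    HasDerivAt (expGreen c F a b) (expGreenDeriv c F a b x) x := by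
  have h := (((hasDerivAt_exp_const_mul (-c) x).mul
      ((hasDerivAt_integral_exp_mul hF c x).const_add a)).add
    ((hasDerivAt_exp_const_mul c x).mul
      ((hasDerivAt_integral_exp_mul hF (-c) x).const_sub b))).div_const c
  refine h.congr_deriv ?_
  unfold expGreenDeriv
  field_simp
  ring

lemma hasDerivAt_expGreenDeriv (hF : Continuous F) (x : ℝ) :
    HasDerivAt (expGreenDeriv c F a b) (c ^ 2 * expGreen c F a b x - 2 * F x) x := by
  have h := ((((hasDerivAt_exp_const_mul (-c) x).mul
      ((hasDerivAt_integral_exp_mul hF c x).const_add a))).neg.add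
    ((hasDerivAt_exp_const_mul c x).mul
      ((hasDerivAt_integral_exp_mul hF (-c) x).const_sub b)))
  have hexp : exp (-(c * x)) * exp (c * x) = 1 := by rw [← exp_add]; simp
  refine h.congr_deriv ?_
  unfold expGreen
  field_simp
  linear_combination (-2 * F x) * hexp

lemma differentiable_expGreen (hc : c ≠ 0) (hF : Continuous F) :
    Differentiable ℝ (expGreen c F a b) :=
  fun x => (hasDerivAt_expGreen a b hc hF x).differentiableAt

lemma deriv_expGreen (hc : c ≠ 0) (hF : Continuous F) :
    deriv (expGreen c F a b) = expGreenDeriv c F a b :=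
  funext fun x => (hasDerivAt_expGreen a b hc hF x).deriv

lemma deriv_expGreenDeriv (hF : Continuous F) :
    deriv (expGreenDeriv c F a b) = fun x => c ^ 2 * expGreen c F a b x - 2 * F x :=
  funext fun x => (hasDerivAt_expGreenDeriv a b hF x).deriv

lemma contDiff_expGreen (hc : c ≠ 0) (hF : Continuous F) : ContDiff ℝ 2 (expGreen c F a b) := by
  rw [show (2 : WithTop ℕ∞) = 1 + 1 by norm_num, contDiff_succ_iff_deriv,
    deriv_expGreen a b hc hF,
    contDiff_one_iff_deriv, deriv_expGreenDeriv a b hF]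
  exact ⟨differentiable_expGreen a b hc hF, by simp,
    fun x => (hasDerivAt_expGreenDeriv a b hF x).differentiableAt,
    (continuous_const.mul (differentiable_expGreen a b hc hF).continuous).sub
      (continuous_const.mul hF)⟩

lemma iteratedDeriv_two_expGreen (hc : c ≠ 0) (hF : Continuous F) (x : ℝ) :
    iteratedDeriv 2 (expGreen c F a b) x = c ^ 2 * expGreen c F a b x - 2 * F x := by
  rw [iteratedDeriv_succ, iteratedDeriv_one, deriv_expGreen a b hc hF,
    deriv_expGreenDeriv a b hF]

end expGreen

lemma integrableOn_exp_neg_mul_of_tendsto {c a l : ℝ} {F : ℝ → ℝ} (hc : 0 < c)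
    (hF : ContinuousOn F (Ici a)) (hlim : Tendsto F atTop (nhds l)) :
    IntegrableOn (fun y => exp (-c * y) * F y) (Ioi a) :=
  integrable_of_isBigO_exp_neg hc ((continuousOn_id.const_smul (-c)).rexp.mul hF) <| by
    simpa using (Asymptotics.isBigO_refl (fun y => exp (-c * y)) atTop).mul (hlim.isBigO_one ℝ)

lemma setIntegral_Ioi_exp_neg_mul_abs_sub {c x : ℝ} {F : ℝ → ℝ} (hF : Continuous F)
    (hint : IntegrableOn (fun y => exp (-c * y) * F y) (Ioi 0)) (hx : 0 ≤ x) :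
    ∫ y in Ioi 0, exp (-c * |y - x|) * F y =
      exp (-c * x) * (∫ y in (0:ℝ)..x, exp (c * y) * F y) +
        exp (c * x) *
          ((∫ y in Ioi 0, exp (-c * y) * F y) - ∫ y in (0:ℝ)..x, exp (-c * y) * F y) := by
  have hleft : EqOn (fun y => exp (-c * |y - x|) * F y)
      (fun y => exp (-c * x) * (exp (c * y) * F y)) (uIcc 0 x) := fun y hy => by
    rw [uIcc_of_le hx] at hy
    dsimp only
    rw [abs_of_nonpos (sub_nonpos.mpr hy.2), ← mul_assoc, ← exp_add]
    ring_nf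
  have hright : EqOn (fun y => exp (-c * |y - x|) * F y)
      (fun y => exp (c * x) * (exp (-c * y) * F y)) (Ioi x) := fun y hy => by
    dsimp only
    rw [abs_of_pos (sub_pos.mpr hy), ← mul_assoc, ← exp_add]
    ring_nf
  have hint_right : IntegrableOn (fun y => exp (-c * |y - x|) * F y) (Ioi x) :=
    IntegrableOn.congr_fun ((hint.mono_set (Ioi_subset_Ioi hx)).const_mul (exp (c * x)))
      hright.symm measurableSet_Ioi
  have hcont : Continuous fun y => exp (-c * |y - x|) * F y := by fun_prop
  rw [← intervalIntegral.integral_interval_add_Ioi' (hcont.intervalIntegrable _ _) hint_right,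
    intervalIntegral.integral_congr hleft, setIntegral_congr_fun measurableSet_Ioi hright,
    intervalIntegral.integral_const_mul, integral_const_mul,
    ← intervalIntegral.integral_Ioi_sub_Ioi hint hx]
  ring

/-- The Dirichlet resolvent on the half line: with
`U^B_α f(x) = ∫_0^∞ (1/√(2α)) e^{-√(2α)|y-x|} f(y) dy` and
`u(x) = U^B_α f(x) - e^{-√(2α) x} U^B_α f(0)`, one has `u(0) = 0`, `u` is twice
continuously differentiable, `u'' = 2(α u - f)`, and `u''(0) = -2 f(0)`. -/
theorem dirichlet_resolvent_halfline (α : ℝ) (hα : 0 < α) (f : ℝ → ℝ)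
    (hf : ContinuousOn f (Set.Ici 0)) (hf0 : Tendsto f atTop (nhds 0))
    (UB u : ℝ → ℝ)
    (hUB : ∀ x, UB x = ∫ y in Set.Ioi (0:ℝ),
        (1 / Real.sqrt (2 * α)) * Real.exp (-(Real.sqrt (2 * α)) * |y - x|) * f y)
    (hu : ∀ x, u x = UB x - Real.exp (-(Real.sqrt (2 * α)) * x) * UB 0) :
    u 0 = 0 ∧ ContDiffOn ℝ 2 u (Set.Ici 0) ∧
    (∀ x ∈ Set.Ici (0:ℝ),
      iteratedDerivWithin 2 u (Set.Ici 0) x = 2 * (α * u x - f x)) ∧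
    iteratedDerivWithin 2 u (Set.Ici 0) 0 = -2 * f 0 := by
  set c := Real.sqrt (2 * α)
  have hc : 0 < c := Real.sqrt_pos.mpr (by linarith)
  set F : ℝ → ℝ := fun y => f (max y 0)
  have hF : Continuous F := hf.comp_continuous (by fun_prop) (fun y => le_max_right y 0)
  have hFf : EqOn F f (Ici 0) := fun y hy => by simp [F, max_eq_left (mem_Ici.mp hy)]
  have hint : IntegrableOn (fun y => exp (-c * y) * F y) (Ioi 0) :=
    integrableOn_exp_neg_mul_of_tendsto hc hF.continuousOn
      (hf0.congr' (eventually_ge_atTop 0 |>.mono fun y hy => (hFf hy).symm))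
  set w := expGreen c F (-c * UB 0) (∫ y in Ioi 0, exp (-c * y) * F y)
  have hw : ContDiff ℝ 2 w := contDiff_expGreen _ _ hc.ne' hF
  have huw : EqOn u w (Ici 0) := fun x hx => by
    have hUBx : UB x = (1 / c) * ∫ y in Ioi 0, exp (-c * |y - x|) * F y := by
      rw [hUB, ← integral_const_mul]
      refine setIntegral_congr_fun measurableSet_Ioi fun y hy => ?_
      simp only [hFf (mem_Ici_of_Ioi hy), mul_assoc]
    rw [hu, hUBx, setIntegral_Ioi_exp_neg_mul_abs_sub hF hint hx]
    simp only [w, expGreen]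
    field_simp
    ring
  have hu'' : ∀ x ∈ Ici (0:ℝ), iteratedDerivWithin 2 u (Ici 0) x = 2 * (α * u x - f x) := by
    intro x hx
    rw [iteratedDerivWithin_congr huw hx,
      iteratedDerivWithin_eq_iteratedDeriv (uniqueDiffOn_Ici 0) hw.contDiffAt hx,
      iteratedDeriv_two_expGreen _ _ hc.ne' hF]
    change c ^ 2 * w x - _ = _
    rw [← huw hx, ← hFf hx,
      Real.sq_sqrt (by linarith)]
    ring
  have hu0 : u 0 = 0 := by simp [hu]
  exact ⟨hu0, hw.contDiffOn.congr huw, hu'', by rw [hu'' 0 self_mem_Ici, hu0]; ring⟩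
end
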